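/- Precision maximality of the optimal tree: for every valid configuration c = (z, σ, t) and every reachable tree t' ∈ D(c), p(t') ≤ p(t*(c)), i.e., |t' ∩ t_G| / |t'| ≤ |t*(c) ∩ t_G| / |t*(c)|. (Part of the proof of Theorem 1.) -/

import Mathlib

/-!
Formalization of the span-based Structure/Label transition parsing system of
Cross & Huang (2016), "Span-Based Constituency Parsing with a Structure-Label
System and Provably Optimal Dynamic Oracles".

A configuration is `(z, σ, t)` where `z` is the step number, `σ` the stack of
span boundaries and `t` the set of brackets built so far.  A bracket is a
triple `(X, i, j)` with `X` a nonterminal label and `i < j ≤ n` a span.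
-/

namespace SpanParser

structure Config (N : Type*) where
  z : ℕ
  σ : List ℕ
  t : Finset (N × ℕ × ℕ)

variable {N : Type*}

/-- The span of a bracket. -/
def span (b : N × ℕ × ℕ) : ℕ × ℕ := b.2

/-- Top (rightmost) boundary of the stack. -/
def topJ (σ : List ℕ) : ℕ := σ.getLastD 0

/-- Second-to-top boundary of the stack. -/
def topI (σ : List ℕ) : ℕ := σ.dropLast.getLastD 0

/-- Parser actions: shift, combine, label-`X`, and nolabel. -/
inductive Action (N : Type*) where
  | sh : Action N
  | comb : Action N
  | label : N → Action N
  | nolabel : Action N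

variable [DecidableEq N]

/-- Applicability of an action at a configuration (for sentence length `n`). -/
def App (n : ℕ) (c : Config N) : Action N → Prop
  | .sh      => Even c.z ∧ c.σ ≠ [] ∧ topJ c.σ < n
  | .comb    => Even c.z ∧ 3 ≤ c.σ.length
  | .label _ => Odd c.z ∧ 2 ≤ c.σ.length
  | .nolabel => Odd c.z ∧ 2 ≤ c.σ.length ∧ c.z < 4 * n - 1

/-- The result `τ(c)` of applying action `τ` to configuration `c`. -/
def doAct (c : Config N) : Action N → Config N
  | .sh      => ⟨c.z + 1, c.σ ++ [topJ c.σ + 1], c.t⟩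
  | .comb    => ⟨c.z + 1, c.σ.dropLast.dropLast ++ [topJ c.σ], c.t⟩
  | .label X => ⟨c.z + 1, c.σ, insert (X, topI c.σ, topJ c.σ) c.t⟩
  | .nolabel => ⟨c.z + 1, c.σ, c.t⟩

/-- The initial configuration `(0, [0], ∅)`. -/
def initial (N : Type*) : Config N := ⟨0, [0], ∅⟩

/-- One transition step `c ⊢ c'`. -/
def Step (n : ℕ) (c c' : Config N) : Prop := ∃ a, App n c a ∧ c' = doAct c a

/-- `⊢*`: reflexive-transitive closure of the transition relation. -/
def Reaches (n : ℕ) : Config N → Config N → Prop := Relation.ReflTransGen (Step n)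

/-- A configuration is valid if it is reachable from the initial configuration. -/
def Valid (n : ℕ) (c : Config N) : Prop := Reaches n (initial N) c

/-- A final configuration: `σ = [0, n]` and `z = 4n - 2`. -/
def Final (n : ℕ) (c : Config N) : Prop := c.σ = [0, n] ∧ c.z = 4 * n - 2

/-- `D(c)`: the set of trees of final configurations reachable from `c`. -/
def Dset (n : ℕ) (c : Config N) : Set (Finset (N × ℕ × ℕ)) :=
  {t' | ∃ c', Reaches n c c' ∧ Final n c' ∧ c'.t = t'}

/-- `(i,j) ⪯ (p,q)`: span `(i,j)` is encompassed by `(p,q)`, i.e. `p ≤ i < j ≤ q`. -/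
def Enc (s₁ s₂ : ℕ × ℕ) : Prop := s₂.1 ≤ s₁.1 ∧ s₁.1 < s₁.2 ∧ s₁.2 ≤ s₂.2

/-- `(i,j) ≺ (p,q)`: strict encompassment. -/
def SEnc (s₁ s₂ : ℕ × ℕ) : Prop := Enc s₁ s₂ ∧ s₁ ≠ s₂

/-- `tG` is a gold tree for sentence length `n`: valid spans, pairwise-distinct
spans, pairwise non-crossing spans, and exactly one bracket with span `(0, n)`
(uniqueness follows from distinctness of spans). -/
structure IsGold (n : ℕ) (tG : Finset (N × ℕ × ℕ)) : Prop where
  validSpans : ∀ b ∈ tG, (span b).1 < (span b).2 ∧ (span b).2 ≤ n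
  distinctSpans : ∀ b₁ ∈ tG, ∀ b₂ ∈ tG, span b₁ = span b₂ → b₁ = b₂
  noncrossing : ∀ b₁ ∈ tG, ∀ b₂ ∈ tG,
    Enc (span b₁) (span b₂) ∨ Enc (span b₂) (span b₁) ∨
    (span b₁).2 ≤ (span b₂).1 ∨ (span b₂).2 ≤ (span b₁).1
  root : ∃ X, (X, 0, n) ∈ tG

open Classical in
/-- `left(c)`: gold brackets (strictly, at even steps) encompassing the top
span whose left boundary occurs on the stack. -/
noncomputable def leftSet (tG : Finset (N × ℕ × ℕ)) (c : Config N) :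
    Finset (N × ℕ × ℕ) :=
  tG.filter fun b =>
    (if Even c.z then SEnc (topI c.σ, topJ c.σ) (span b)
     else Enc (topI c.σ, topJ c.σ) (span b)) ∧ (span b).1 ∈ c.σ

open Classical in
/-- `right(c)`: gold brackets entirely on the queue. -/
noncomputable def rightSet (tG : Finset (N × ℕ × ℕ)) (c : Config N) :
    Finset (N × ℕ × ℕ) :=
  tG.filter fun b => topJ c.σ ≤ (span b).1

open Classical in
/-- `reach(c)`: the reachable gold brackets (all of `t_G` at the initial
configuration, whose stack has fewer than two boundaries). -/
noncomputable def reach (tG : Finset (N × ℕ × ℕ)) (c : Config N) :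
    Finset (N × ℕ × ℕ) :=
  if c.σ.length < 2 then tG else leftSet tG c ∪ rightSet tG c

/-- The optimal tree `t*(c) = t ∪ reach(c)`. -/
noncomputable def tstar (tG : Finset (N × ℕ × ℕ)) (c : Config N) :
    Finset (N × ℕ × ℕ) :=
  c.t ∪ reach tG c

/-- `b = next(c)`: the `≺`-minimal element of `left(c)`. -/
def IsNext (tG : Finset (N × ℕ × ℕ)) (c : Config N) (b : N × ℕ × ℕ) : Prop :=
  b ∈ leftSet tG c ∧ ∀ b' ∈ leftSet tG c, Enc (span b) (span b')

/-- The dynamic-oracle policy `dyna(c)` as a predicate on actions. -/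
def Dyna (tG : Finset (N × ℕ × ℕ)) (c : Config N) (a : Action N) : Prop :=
  if c.σ.length < 2 then a = Action.sh
  else if Even c.z then
    ∃ b, IsNext tG c b ∧
      (((span b).1 = topI c.σ ∧ topJ c.σ < (span b).2 ∧ a = Action.sh) ∨
       ((span b).1 < topI c.σ ∧ (span b).2 = topJ c.σ ∧ a = Action.comb) ∨
       ((span b).1 < topI c.σ ∧ topJ c.σ < (span b).2 ∧
          (a = Action.sh ∨ a = Action.comb)))
  else
    (∃ X, (X, topI c.σ, topJ c.σ) ∈ tG ∧ a = Action.label X) ∨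
    ((∀ X, (X, topI c.σ, topJ c.σ) ∉ tG) ∧ a = Action.nolabel)

/-- `F1` of a predicted bracket set `t'` against the gold tree `tG`
(`0` when `t' ∩ tG = ∅`). -/
noncomputable def f1 (tG t' : Finset (N × ℕ × ℕ)) : ℝ :=
  if t' ∩ tG = ∅ then 0
  else
    (2 * (((t' ∩ tG).card : ℝ) / (tG.card : ℝ)) * (((t' ∩ tG).card : ℝ) / (t'.card : ℝ))) /
      ((((t' ∩ tG).card : ℝ) / (tG.card : ℝ)) + (((t' ∩ tG).card : ℝ) / (t'.card : ℝ)))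

/-- `F1(c)`: the best `F1` among trees reachable from `c`. -/
noncomputable def configF1 (n : ℕ) (tG : Finset (N × ℕ × ℕ)) (c : Config N) : ℝ :=
  sSup (f1 tG '' Dset n c)

/-- A run of (applicable) actions from one configuration to another. -/
inductive Run (n : ℕ) : Config N → List (Action N) → Config N → Prop
  | refl (c : Config N) : Run n c [] c
  | step {c c' : Config N} {as : List (Action N)} (a : Action N)
      (happ : App n c a) (h : Run n (doAct c a) as c') : Run n c (a :: as) c'

/-- A run all of whose actions follow the dynamic oracle. -/
inductive DynaRun (n : ℕ) (tG : Finset (N × ℕ × ℕ)) : Config N → Config N → Prop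
  | refl (c : Config N) : DynaRun n tG c c
  | step {c c' : Config N} (a : Action N) (happ : App n c a) (hdyna : Dyna tG c a)
      (h : DynaRun n tG (doAct c a) c') : DynaRun n tG c c'

def isSh : Action N → Bool
  | .sh => true
  | _ => false

def isComb : Action N → Bool
  | .comb => true
  | _ => false

/-- Label-step actions: `label-X` or `nolabel`. -/
def isLabelStep : Action N → Bool
  | .label _ => true
  | .nolabel => true
  | _ => false


end SpanParser

/-!
Along a run the gold part `t*(c) ∩ t_G = (t ∩ t_G) ∪ reach(c)` can only shrink: a freshly
labelled gold bracket `(X, i, j)` already lies in `left(c)`, and every action maps `reach` of the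
new configuration into `reach` of the old one, which only needs the stack to be strictly
increasing. The wrong part `t*(c) \ t_G = t \ t_G` can only grow. Hence a reachable final tree
has at most the correct and at least the wrong brackets of `t*(c)`, and no larger precision.
-/

theorem List.exists_eq_append_pair {α : Type*} {l : List α} (h : 2 ≤ l.length) :
    ∃ m a b, l = m ++ [a, b] := by
  rcases l.eq_nil_or_concat' with rfl | ⟨L, b, rfl⟩
  · simp at h
  rcases L.eq_nil_or_concat' with rfl | ⟨m, a, rfl⟩
  · simp at h
  exact ⟨m, a, b, by simp⟩

theorem List.rel_of_pairwise_append_pair {α : Type*} {R : α → α → Prop} {l : List α}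
    {a b : α} (h : (l ++ [a, b]).Pairwise R) : (∀ x ∈ l, R x a) ∧ R a b := by
  simp only [List.pairwise_append, List.pairwise_cons, List.mem_cons] at h
  exact ⟨fun x hx => h.2.2 x hx a (.inl rfl), h.2.1.1 b (.inl rfl)⟩

theorem List.dropLast_dropLast_append_pair {α : Type*} (l : List α) (a b : α) :
    (l ++ [a, b]).dropLast.dropLast = l := by
  rw [← List.singleton_append, ← List.append_assoc, List.dropLast_concat, List.dropLast_concat]

theorem Finset.card_inter_div_card_le_of_subset {α : Type*} [DecidableEq α] {s t g : Finset α}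
    (hinter : s ∩ g ⊆ t ∩ g) (hsdiff : t \ g ⊆ s \ g) :
    ((s ∩ g).card : ℝ) / s.card ≤ ((t ∩ g).card : ℝ) / t.card := by
  have hgood : ((s ∩ g).card : ℝ) ≤ (t ∩ g).card := by
    exact_mod_cast Finset.card_le_card hinter
  have hbad : ((t \ g).card : ℝ) ≤ (s \ g).card := by exact_mod_cast Finset.card_le_card hsdiff
  rw [← Finset.card_inter_add_card_sdiff s g, ← Finset.card_inter_add_card_sdiff t g]
  push_cast
  rcases (s ∩ g).card.eq_zero_or_pos with h0 | hpos
  · rw [h0, Nat.cast_zero, zero_div]; positivity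
  have hpos : (0 : ℝ) < (s ∩ g).card := by exact_mod_cast hpos
  rw [div_le_div_iff₀ (add_pos_of_pos_of_nonneg hpos (Nat.cast_nonneg _))
    (add_pos_of_pos_of_nonneg (hpos.trans_le hgood) (Nat.cast_nonneg _))]
  nlinarith [mul_le_mul hgood hbad (Nat.cast_nonneg _) (Nat.cast_nonneg _)]

namespace SpanParser

variable {N : Type*} {n : ℕ} {tG : Finset (N × ℕ × ℕ)}

@[simp] lemma topJ_append_singleton (σ : List ℕ) (j : ℕ) : topJ (σ ++ [j]) = j :=
  List.getLastD_concat

@[simp] lemma topI_append_singleton (σ : List ℕ) (j : ℕ) : topI (σ ++ [j]) = topJ σ := by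
  rw [topI, List.dropLast_concat, topJ]

@[simp] lemma topJ_append_pair (σ : List ℕ) (i j : ℕ) : topJ (σ ++ [i, j]) = j := by
  rw [← List.singleton_append, ← List.append_assoc, topJ_append_singleton]

@[simp] lemma topI_append_pair (σ : List ℕ) (i j : ℕ) : topI (σ ++ [i, j]) = i := by
  rw [← List.singleton_append, ← List.append_assoc, topI_append_singleton,
    topJ_append_singleton]

lemma le_topJ_of_mem {σ : List ℕ} (hs : σ.Pairwise (· < ·)) {p : ℕ} (hp : p ∈ σ) :
    p ≤ topJ σ := by
  obtain ⟨l, j, rfl⟩ := σ.eq_nil_or_concat'.resolve_left (List.ne_nil_of_mem hp)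
  rw [topJ_append_singleton]
  rcases List.mem_append.1 hp with hp | hp
  · exact (List.pairwise_append.1 hs |>.2.2 p hp j (List.mem_singleton_self j)).le
  · exact (List.mem_singleton.1 hp).le

lemma le_topI_of_mem_of_lt_topJ {σ : List ℕ} (hs : σ.Pairwise (· < ·)) {p : ℕ}
    (hp : p ∈ σ) (hpj : p < topJ σ) : p ≤ topI σ := by
  obtain ⟨l, j, rfl⟩ := σ.eq_nil_or_concat'.resolve_left (List.ne_nil_of_mem hp)
  rw [topJ_append_singleton] at hpj
  rw [topI_append_singleton]
  have hpl : p ∈ l := by simpa [hpj.ne] using hp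
  exact le_topJ_of_mem (List.pairwise_append.1 hs).1 hpl

lemma topI_lt_topJ {σ : List ℕ} (hs : σ.Pairwise (· < ·)) (hlen : 2 ≤ σ.length) :
    topI σ < topJ σ := by
  obtain ⟨l, i, j, rfl⟩ := List.exists_eq_append_pair hlen
  simpa using (List.rel_of_pairwise_append_pair hs).2

lemma topI_mem {σ : List ℕ} (hlen : 2 ≤ σ.length) : topI σ ∈ σ := by
  obtain ⟨l, i, j, rfl⟩ := List.exists_eq_append_pair hlen
  simp

lemma mem_leftSet {c : Config N} {b : N × ℕ × ℕ} :
    b ∈ leftSet tG c ↔ b ∈ tG ∧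
      (if Even c.z then SEnc (topI c.σ, topJ c.σ) (span b)
       else Enc (topI c.σ, topJ c.σ) (span b)) ∧ (span b).1 ∈ c.σ := by
  classical
  rw [leftSet, Finset.mem_filter]

lemma mem_rightSet {c : Config N} {b : N × ℕ × ℕ} :
    b ∈ rightSet tG c ↔ b ∈ tG ∧ topJ c.σ ≤ (span b).1 := by
  classical
  rw [rightSet, Finset.mem_filter]

variable [DecidableEq N]

lemma pairwise_lt_doAct {c : Config N} {a : Action N} (hs : c.σ.Pairwise (· < ·))
    (ha : App n c a) : (doAct c a).σ.Pairwise (· < ·) := by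
  match a, ha with
  | .label _, _ | .nolabel, _ => exact hs
  | .sh, _ =>
    refine List.pairwise_append.2 ⟨hs, List.pairwise_singleton _ _, fun p hp q hq => ?_⟩
    rw [List.mem_singleton.1 hq]
    exact Nat.lt_succ_of_le (le_topJ_of_mem hs hp)
  | .comb, ⟨_, hlen⟩ =>
    obtain ⟨l, i, j, hl⟩ := List.exists_eq_append_pair (show 2 ≤ c.σ.length by omega)
    simp only [doAct, hl, List.dropLast_dropLast_append_pair, topJ_append_pair]
    rw [hl] at hs
    exact hs.sublist ((List.sublist_cons_self i [j]).append_left l)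

lemma Reaches.pairwise_lt {c c' : Config N} (h : Reaches n c c') (hs : c.σ.Pairwise (· < ·)) :
    c'.σ.Pairwise (· < ·) := by
  induction h with
  | refl => exact hs
  | tail _ hstep ih =>
    obtain ⟨a, ha, rfl⟩ := hstep
    exact pairwise_lt_doAct ih ha

lemma Valid.pairwise_lt {c : Config N} (hc : Valid n c) : c.σ.Pairwise (· < ·) :=
  Reaches.pairwise_lt hc (by simp [initial])

lemma t_subset_doAct (c : Config N) (a : Action N) : c.t ⊆ (doAct c a).t := by
  cases a <;> simp [doAct, Finset.subset_insert]

lemma Reaches.t_subset {c c' : Config N} (h : Reaches n c c') : c.t ⊆ c'.t := by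
  induction h with
  | refl => exact subset_rfl
  | tail _ hstep ih =>
    obtain ⟨a, -, rfl⟩ := hstep
    exact ih.trans (t_subset_doAct _ a)

lemma reach_of_length_lt_two {c : Config N} (h : c.σ.length < 2) : reach tG c = tG :=
  if_pos h

lemma reach_of_two_le_length {c : Config N} (h : 2 ≤ c.σ.length) :
    reach tG c = leftSet tG c ∪ rightSet tG c :=
  if_neg (not_lt.2 h)

lemma reach_subset (tG : Finset (N × ℕ × ℕ)) (c : Config N) : reach tG c ⊆ tG := by
  rcases lt_or_ge c.σ.length 2 with h | h
  · rw [reach_of_length_lt_two h]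
  · rw [reach_of_two_le_length h]
    exact Finset.union_subset (fun b hb => (mem_leftSet.1 hb).1) fun b hb => (mem_rightSet.1 hb).1

lemma tstar_inter_eq (tG : Finset (N × ℕ × ℕ)) (c : Config N) :
    tstar tG c ∩ tG = c.t ∩ tG ∪ reach tG c := by
  rw [tstar, Finset.union_inter_distrib_right, Finset.inter_eq_left.2 (reach_subset tG c)]

lemma tstar_sdiff_eq (tG : Finset (N × ℕ × ℕ)) (c : Config N) :
    tstar tG c \ tG = c.t \ tG := by
  rw [tstar, Finset.union_sdiff_distrib, Finset.sdiff_eq_empty_iff_subset.2 (reach_subset tG c),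
    Finset.union_empty]

-- A bracket `(p, q)` of `left` after the shift has `p ≤ j < q`: if `p = j` it was in `right`,
-- otherwise `p ≤ i` and it strictly encompasses `(i, j)`.
lemma reach_sh_subset {c : Config N} (hs : c.σ.Pairwise (· < ·)) (hz : Even c.z) :
    reach tG (doAct c .sh) ⊆ reach tG c := by
  rcases lt_or_ge c.σ.length 2 with hlen | hlen
  · rw [reach_of_length_lt_two hlen]; exact reach_subset tG _
  have hij := topI_lt_topJ hs hlen
  rintro ⟨X, p, q⟩ hb
  rw [reach_of_two_le_length (by simp [doAct]; omega)] at hb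
  rw [reach_of_two_le_length hlen]
  simp only [Finset.mem_union, mem_leftSet, mem_rightSet, doAct, topI_append_singleton,
    topJ_append_singleton, Nat.even_add_one, hz, not_true_eq_false, if_false, span, Enc,
    List.mem_append, List.mem_singleton] at hb ⊢
  rcases hb with ⟨hbG, ⟨hpj, -, hjq⟩, hp⟩ | ⟨hbG, hjp⟩
  · rcases hpj.eq_or_lt with rfl | hpj
    · exact .inr ⟨hbG, le_rfl⟩
    have hp : p ∈ c.σ := hp.resolve_right (by omega)
    refine .inl ⟨hbG, ⟨⟨le_topI_of_mem_of_lt_topJ hs hp hpj, hij, by omega⟩, ?_⟩, hp⟩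
    simp only [ne_eq, Prod.mk.injEq, not_and]
    omega
  · exact .inr ⟨hbG, by omega⟩

-- A bracket of `left` after the combination starts in `l`, below the popped boundary `i`, so it
-- strictly encompasses `(i, j)`.
lemma reach_comb_subset {c : Config N} (hs : c.σ.Pairwise (· < ·)) (hz : Even c.z)
    (hlen : 3 ≤ c.σ.length) : reach tG (doAct c .comb) ⊆ reach tG c := by
  obtain ⟨l, i, j, hl⟩ := List.exists_eq_append_pair (show 2 ≤ c.σ.length by omega)
  rw [hl] at hs
  have hli := (List.rel_of_pairwise_append_pair hs).1
  rintro ⟨X, p, q⟩ hb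
  rw [reach_of_two_le_length (by simp [doAct, hl] at hlen ⊢; omega)] at hb
  rw [reach_of_two_le_length (by omega)]
  simp only [Finset.mem_union, mem_leftSet, mem_rightSet, doAct, hl,
    List.dropLast_dropLast_append_pair, topI_append_singleton, topJ_append_singleton,
    topI_append_pair, topJ_append_pair,
    Nat.even_add_one, hz, not_true_eq_false, if_false, if_true, span, Enc, SEnc,
    List.mem_append, List.mem_singleton] at hb ⊢
  rcases hb with ⟨hbG, ⟨hpx, hxj, hjq⟩, hp⟩ | ⟨hbG, hjp⟩
  · have hp : p ∈ l := hp.resolve_right (by omega)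
    have hpi := hli p hp
    refine .inl ⟨hbG, ⟨⟨hpi.le, (List.rel_of_pairwise_append_pair hs).2, hjq⟩, ?_⟩, ?_⟩
    · simp only [ne_eq, Prod.mk.injEq, not_and]
      omega
    · exact .inl hp
  · exact .inr ⟨hbG, hjp⟩

lemma reach_succ_subset_of_odd {z : ℕ} {σ : List ℕ} (t t' : Finset (N × ℕ × ℕ))
    (hz : Odd z) :
    reach tG ⟨z + 1, σ, t'⟩ ⊆ reach tG ⟨z, σ, t⟩ := by
  rcases lt_or_ge σ.length 2 with hlen | hlen
  · simp [reach, hlen]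
  intro b hb
  rw [reach_of_two_le_length hlen] at hb ⊢
  simp only [Finset.mem_union, mem_leftSet, mem_rightSet, Nat.even_add_one,
    Nat.not_even_iff_odd.2 hz, not_false_eq_true, if_true, if_false] at hb ⊢
  exact hb.imp_left fun ⟨hbG, henc, hmem⟩ => ⟨hbG, henc.1, hmem⟩

lemma reach_doAct_subset {c : Config N} {a : Action N} (hs : c.σ.Pairwise (· < ·))
    (ha : App n c a) : reach tG (doAct c a) ⊆ reach tG c :=
  match a, ha with
  | .sh, ⟨hz, _⟩ => reach_sh_subset hs hz
  | .comb, ⟨hz, hlen⟩ => reach_comb_subset hs hz hlen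
  | .label _, ⟨hz, _⟩ => reach_succ_subset_of_odd _ _ hz
  | .nolabel, ⟨hz, _⟩ => reach_succ_subset_of_odd _ _ hz

lemma t_inter_doAct_subset {c : Config N} {a : Action N} (hs : c.σ.Pairwise (· < ·))
    (ha : App n c a) : (doAct c a).t ∩ tG ⊆ c.t ∩ tG ∪ reach tG c := by
  match a, ha with
  | .sh, _ | .comb, _ | .nolabel, _ => exact Finset.subset_union_left
  | .label X, ⟨hz, hlen⟩ =>
    intro b hb
    obtain ⟨hb, hbG⟩ := Finset.mem_inter.1 hb
    rcases Finset.mem_insert.1 hb with rfl | hbt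
    · rw [reach_of_two_le_length hlen]
      refine Finset.mem_union_right _ (Finset.mem_union_left _ (mem_leftSet.2 ⟨hbG, ?_, ?_⟩))
      · rw [if_neg (Nat.not_even_iff_odd.2 hz)]
        exact ⟨le_rfl, topI_lt_topJ hs hlen, le_rfl⟩
      · exact topI_mem hlen
    · exact Finset.mem_union_left _ (Finset.mem_inter.2 ⟨hbt, hbG⟩)

lemma tstar_inter_doAct_subset {c : Config N} {a : Action N} (hs : c.σ.Pairwise (· < ·))
    (ha : App n c a) : tstar tG (doAct c a) ∩ tG ⊆ tstar tG c ∩ tG := by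
  rw [tstar_inter_eq, tstar_inter_eq]
  exact Finset.union_subset (t_inter_doAct_subset hs ha)
    ((reach_doAct_subset hs ha).trans Finset.subset_union_right)

lemma Reaches.tstar_inter_subset {c c' : Config N} (h : Reaches n c c')
    (hs : c.σ.Pairwise (· < ·)) : tstar tG c' ∩ tG ⊆ tstar tG c ∩ tG := by
  induction h with
  | refl => exact subset_rfl
  | tail hr hstep ih =>
    obtain ⟨a, ha, rfl⟩ := hstep
    exact (tstar_inter_doAct_subset (Reaches.pairwise_lt hr hs) ha).trans ih

theorem precision_maximal_general (n : ℕ) (tG : Finset (N × ℕ × ℕ))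
    (c : Config N) (hc : Valid n c)
    (t' : Finset (N × ℕ × ℕ)) (ht' : t' ∈ Dset n c) :
    ((t' ∩ tG).card : ℝ) / (t'.card : ℝ) ≤
      ((tstar tG c ∩ tG).card : ℝ) / ((tstar tG c).card : ℝ) := by
  obtain ⟨c', hcc', -, rfl⟩ := ht'
  apply Finset.card_inter_div_card_le_of_subset
  · calc c'.t ∩ tG ⊆ tstar tG c' ∩ tG :=
          Finset.inter_subset_inter_right Finset.subset_union_left
      _ ⊆ tstar tG c ∩ tG := hcc'.tstar_inter_subset hc.pairwise_lt
  · rw [tstar_sdiff_eq]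
    exact Finset.sdiff_subset_sdiff hcc'.t_subset subset_rfl

/-- Precision maximality of the optimal tree: for every valid `c` and every
`t' ∈ D(c)`, `p(t') ≤ p(t*(c))`, i.e.
`|t' ∩ t_G| / |t'| ≤ |t*(c) ∩ t_G| / |t*(c)|`. -/
theorem precision_maximal (n : ℕ) (hn : 1 ≤ n) (tG : Finset (N × ℕ × ℕ))
    (hG : IsGold n tG) (c : Config N) (hc : Valid n c)
    (t' : Finset (N × ℕ × ℕ)) (ht' : t' ∈ Dset n c) :
    ((t' ∩ tG).card : ℝ) / (t'.card : ℝ) ≤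
      ((tstar tG c ∩ tG).card : ℝ) / ((tstar tG c).card : ℝ) :=
  precision_maximal_general n tG c hc t' ht'

end SpanParser
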